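/- arXiv:1503.08086 — 2 statements merged into one kernel-verified Lean document; each statement's English description precedes it below -/
import Mathlib

section
/- Let q ≥ 1, let G = (V,E) be a finite graph, and let p̄ = (p_e)_{e ∈ E} and p̄' = (p'_e)_{e ∈ E} be two families of edge parameters in (0,1) with p_e ≤ p'_e for every e ∈ E. Then P_{p̄,q,G} is stochastically dominated by P_{p̄',q,G}: for every increasing event A ⊆ {0,1}^E, P_{p̄,q,G}(A) ≤ P_{p̄',q,G}(A). -/
open Finset

noncomputable section

/-- The number of open edges of a configuration `w : E → Bool`. -/
def openCount {E : Type*} [Fintype E] (w : E → Bool) : ℕ :=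
  (Finset.univ.filter fun e => w e = true).card

/-- The simple graph on the vertex set `V` spanned by the open edges of `w`. -/
def spanned {V E : Type*} (ends : E → Sym2 V) (w : E → Bool) : SimpleGraph V :=
  SimpleGraph.fromEdgeSet {s | ∃ e, w e = true ∧ ends e = s}

/-- `k(w)`: the number of connected components of the graph spanned by the open
edges of `w` (isolated vertices count as components). -/
def compCount {V E : Type*} (ends : E → Sym2 V) (w : E → Bool) : ℕ :=
  Nat.card ((spanned ends w).ConnectedComponent)

/-- The FK weight `(Π_{e open} π_e) q^{k(w)}` of a configuration, for
edge-dependent parameters `π_e = p_e/(1-p_e)`. -/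
def fkWeightBar {V E : Type*} [Fintype E] (ends : E → Sym2 V) (πb : E → ℝ) (q : ℝ)
    (w : E → Bool) : ℝ :=
  (∏ e ∈ Finset.univ.filter fun e => w e = true, πb e) * q ^ compCount ends w

/-- The FK partition function for edge-dependent parameters. -/
def fkZBar {V E : Type*} [Fintype E] [DecidableEq E] (ends : E → Sym2 V) (πb : E → ℝ)
    (q : ℝ) : ℝ :=
  ∑ w : E → Bool, fkWeightBar ends πb q w

/-- The FK-percolation probability of a configuration `w`, for edge-dependent
parameters. -/
def fkPBar {V E : Type*} [Fintype E] [DecidableEq E] (ends : E → Sym2 V) (πb : E → ℝ)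
    (q : ℝ) (w : E → Bool) : ℝ :=
  fkWeightBar ends πb q w / fkZBar ends πb q

/-! ### Auxiliary graph-theoretic lemmas -/

section Aux

open SimpleGraph

variable {V E : Type*}

lemma reach_sup_edge {G : SimpleGraph V} {x y u v : V}
    (h : (G ⊔ SimpleGraph.edge x y).Reachable u v) :
    G.Reachable u v ∨ (G.Reachable u x ∧ G.Reachable y v) ∨
      (G.Reachable u y ∧ G.Reachable x v) := by
  obtain ⟨w⟩ := h
  induction w with
  | nil => exact Or.inl (Reachable.refl _)
  | cons hadj p ih =>
    rename_i a b c
    rw [sup_adj] at hadj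
    rcases hadj with hG | he
    · rcases ih with h1 | ⟨h1, h2⟩ | ⟨h1, h2⟩
      · exact Or.inl (hG.reachable.trans h1)
      · exact Or.inr (Or.inl ⟨hG.reachable.trans h1, h2⟩)
      · exact Or.inr (Or.inr ⟨hG.reachable.trans h1, h2⟩)
    · rw [edge_adj] at he
      rcases he.1 with ⟨rfl, rfl⟩ | ⟨rfl, rfl⟩
      · rcases ih with h1 | ⟨h1, h2⟩ | ⟨h1, h2⟩
        · exact Or.inr (Or.inl ⟨Reachable.refl _, h1⟩)
        · exact Or.inr (Or.inl ⟨Reachable.refl _, h2⟩)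
        · exact Or.inl h2
      · rcases ih with h1 | ⟨h1, h2⟩ | ⟨h1, h2⟩
        · exact Or.inr (Or.inr ⟨Reachable.refl _, h1⟩)
        · exact Or.inl h2
        · exact Or.inr (Or.inr ⟨Reachable.refl _, h2⟩)

lemma cardCC_sup_edge_of_reachable {G : SimpleGraph V} {x y : V} (hr : G.Reachable x y) :
    Nat.card (G ⊔ SimpleGraph.edge x y).ConnectedComponent
      = Nat.card G.ConnectedComponent := by
  have hrel : (G ⊔ SimpleGraph.edge x y).Reachable = G.Reachable := by
    funext u v
    apply propext
    constructor
    · intro h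
      rcases reach_sup_edge h with h1 | ⟨h1, h2⟩ | ⟨h1, h2⟩
      · exact h1
      · exact (h1.trans hr).trans h2
      · exact (h1.trans hr.symm).trans h2
    · exact fun h => h.mono le_sup_left
  unfold SimpleGraph.ConnectedComponent
  rw [hrel]

lemma cardCC_sup_edge_of_not_reachable [Finite V] {G : SimpleGraph V} {x y : V}
    (hxy : x ≠ y) (hr : ¬ G.Reachable x y) :
    Nat.card G.ConnectedComponent
      = Nat.card (G ⊔ SimpleGraph.edge x y).ConnectedComponent + 1 := by
  classical
  set G' := G ⊔ SimpleGraph.edge x y with hG'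
  have hadj : G'.Adj x y := by
    rw [hG', sup_adj, edge_adj]; exact Or.inr ⟨Or.inl ⟨rfl, rfl⟩, hxy⟩
  set f : {c : G.ConnectedComponent // c ≠ G.connectedComponentMk y} → G'.ConnectedComponent :=
    fun c => c.1.map (SimpleGraph.Hom.ofLE (le_sup_left : G ≤ G')) with hf
  have hbij : Function.Bijective f := by
    constructor
    · rintro ⟨c, hc⟩ ⟨c', hc'⟩ h
      obtain ⟨u, rfl⟩ := c.exists_rep
      obtain ⟨v, rfl⟩ := c'.exists_rep
      simp only [hf, ConnectedComponent.map_mk] at h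
      have hreach : G'.Reachable u v := ConnectedComponent.exact h
      rcases reach_sup_edge hreach with h1 | ⟨h1, h2⟩ | ⟨h1, h2⟩
      · exact Subtype.ext (ConnectedComponent.sound h1)
      · exact absurd (ConnectedComponent.sound h2.symm) hc'
      · exact absurd (ConnectedComponent.sound h1) hc
    · intro d
      obtain ⟨v, rfl⟩ := d.exists_rep
      by_cases hvy : G.Reachable v y
      · refine ⟨⟨G.connectedComponentMk x, fun hxe => hr (ConnectedComponent.exact hxe)⟩, ?_⟩
        simp only [hf, ConnectedComponent.map_mk]
        exact ConnectedComponent.sound (hadj.reachable.trans ((hvy.mono le_sup_left).symm))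
      · exact ⟨⟨G.connectedComponentMk v, fun hve => hvy (ConnectedComponent.exact hve)⟩,
          rfl⟩
  have hcard := Nat.card_eq_of_bijective f hbij
  rw [← hcard]
  haveI : Fintype G.ConnectedComponent := Fintype.ofFinite _
  rw [Nat.card_eq_fintype_card, Nat.card_eq_fintype_card]
  have h1 : Fintype.card {c : G.ConnectedComponent // c = G.connectedComponentMk y} = 1 :=
    Fintype.card_subtype_eq _
  have h2 := Fintype.card_subtype_compl (fun c : G.ConnectedComponent =>
    c = G.connectedComponentMk y)
  have h3 : Fintype.card {c : G.ConnectedComponent // c ≠ G.connectedComponentMk y}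
      = Fintype.card {c : G.ConnectedComponent // ¬ c = G.connectedComponentMk y} := rfl
  have h4 : 1 ≤ Fintype.card G.ConnectedComponent :=
    Fintype.card_pos_iff.mpr ⟨G.connectedComponentMk y⟩
  omega

lemma kG_edge [Finite V] {H H' : SimpleGraph V} (hle : H ≤ H') (x y : V) (hxy : x ≠ y) :
    Nat.card (H ⊔ SimpleGraph.edge x y).ConnectedComponent + Nat.card H'.ConnectedComponent
      ≤ Nat.card H.ConnectedComponent
        + Nat.card (H' ⊔ SimpleGraph.edge x y).ConnectedComponent := by
  by_cases hr' : H'.Reachable x y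
  · rw [cardCC_sup_edge_of_reachable hr']
    by_cases hr : H.Reachable x y
    · rw [cardCC_sup_edge_of_reachable hr]
    · have := cardCC_sup_edge_of_not_reachable hxy hr
      omega
  · have h1 := cardCC_sup_edge_of_not_reachable hxy hr'
    have hr : ¬ H.Reachable x y := fun h => hr' (h.mono hle)
    have h2 := cardCC_sup_edge_of_not_reachable hxy hr
    omega

lemma spanned_mono (ends : E → Sym2 V) {w w' : E → Bool}
    (h : ∀ e, w e = true → w' e = true) : spanned ends w ≤ spanned ends w' := by
  apply SimpleGraph.fromEdgeSet_mono
  rintro s ⟨e, he, rfl⟩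
  exact ⟨e, h e he, rfl⟩

lemma spanned_update [DecidableEq E] (ends : E → Sym2 V) (w : E → Bool) (e : E) (x y : V)
    (hxy : ends e = s(x, y)) :
    spanned ends (Function.update w e true) = spanned ends w ⊔ SimpleGraph.edge x y := by
  rw [spanned, spanned, SimpleGraph.edge, ← SimpleGraph.fromEdgeSet_union]
  congr 1
  ext s
  simp only [Set.mem_setOf_eq, Set.mem_union, Set.mem_singleton_iff]
  constructor
  · rintro ⟨e', he', rfl⟩
    by_cases h : e' = e
    · subst h; exact Or.inr hxy
    · rw [Function.update_of_ne h] at he'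
      exact Or.inl ⟨e', he', rfl⟩
  · rintro (⟨e', he', rfl⟩ | rfl)
    · by_cases h : e' = e
      · subst h; exact ⟨e', by simp, rfl⟩
      · exact ⟨e', by rwa [Function.update_of_ne h], rfl⟩
    · exact ⟨e, by simp, hxy⟩

lemma compCount_update_ineq [Finite V] [DecidableEq E] (ends : E → Sym2 V)
    (h_nondiag : ∀ e, ¬ (ends e).IsDiag) {u v : E → Bool}
    (h : ∀ e, u e = true → v e = true) (e : E) :
    compCount ends (Function.update u e true) + compCount ends v
      ≤ compCount ends u + compCount ends (Function.update v e true) := by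
  obtain ⟨⟨x, y⟩, hxy⟩ := Quot.exists_rep (ends e)
  have hxy' : ends e = s(x, y) := hxy.symm
  have hne : x ≠ y := by
    intro h
    exact h_nondiag e (by rw [hxy', h]; exact Sym2.isDiag_iff_proj_eq |>.mpr rfl)
  rw [compCount, compCount, compCount, compCount,
    spanned_update ends u e x y hxy', spanned_update ends v e x y hxy']
  exact kG_edge (spanned_mono ends h) x y hne

lemma compCount_supermod [Finite V] [Fintype E] [DecidableEq E] (ends : E → Sym2 V)
    (h_nondiag : ∀ e, ¬ (ends e).IsDiag) (a b : E → Bool) :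
    compCount ends a + compCount ends b
      ≤ compCount ends (a ⊓ b) + compCount ends (a ⊔ b) := by
  classical
  suffices H : ∀ (n : ℕ) (a : E → Bool),
      (univ.filter fun e => a e = true ∧ b e = false).card ≤ n →
      compCount ends a + compCount ends b
        ≤ compCount ends (a ⊓ b) + compCount ends (a ⊔ b) by
    exact H _ a le_rfl
  intro n
  induction n with
  | zero =>
    intro a ha
    have hsub : ∀ e, a e = true → b e = true := by
      intro e he
      by_contra hb
      have : e ∈ univ.filter fun e => a e = true ∧ b e = false := by
        simp [he, Bool.eq_false_iff.mpr hb]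
      have := card_pos.mpr ⟨e, this⟩
      omega
    have h1 : a ⊓ b = a := by
      funext e
      show (a e && b e) = a e
      cases hae : a e
      · simp
      · simp [hsub e hae]
    have h2 : a ⊔ b = b := by
      funext e
      show (a e || b e) = b e
      cases hae : a e
      · simp
      · simp [hsub e hae]
    rw [h1, h2]
  | succ n ih =>
    intro a ha
    by_cases hemp : (univ.filter fun e => a e = true ∧ b e = false).card = 0
    · have hsub : ∀ e, a e = true → b e = true := by
        intro e he
        by_contra hb
        have : e ∈ univ.filter fun e => a e = true ∧ b e = false := by
          simp [he, Bool.eq_false_iff.mpr hb]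
        have := card_pos.mpr ⟨e, this⟩
        omega
      have h1 : a ⊓ b = a := by
        funext e
        show (a e && b e) = a e
        cases hae : a e
        · simp
        · simp [hsub e hae]
      have h2 : a ⊔ b = b := by
        funext e
        show (a e || b e) = b e
        cases hae : a e
        · simp
        · simp [hsub e hae]
      rw [h1, h2]
    · obtain ⟨e, he⟩ := card_pos.mp (Nat.pos_of_ne_zero hemp)
      simp only [mem_filter] at he
      obtain ⟨-, hae, hbe⟩ := he
      set a' := Function.update a e false with ha'
      have hcard : (univ.filter fun e' => a' e' = true ∧ b e' = false)
          = (univ.filter fun e' => a e' = true ∧ b e' = false).erase e := by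
        ext e'
        simp only [mem_filter, mem_erase, mem_univ, true_and, ha']
        by_cases h : e' = e
        · subst h; simp [Function.update_self]
        · simp [Function.update_of_ne h, h]
      have hle' : (univ.filter fun e' => a' e' = true ∧ b e' = false).card ≤ n := by
        rw [hcard]
        have : e ∈ univ.filter fun e' => a e' = true ∧ b e' = false := by
          simp [hae, hbe]
        have := card_erase_of_mem this
        omega
      have IH := ih a' hle'
      have hmono : ∀ e', a' e' = true → (a' ⊔ b) e' = true := by
        intro e' he'
        show (a' e' || b e') = true
        simp [he']
      have hedge := compCount_update_ineq ends h_nondiag hmono e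
      have hA : Function.update a' e true = a := by
        funext e'
        by_cases h : e' = e
        · subst h; simp [Function.update_self, hae]
        · simp [ha', Function.update_of_ne h]
      have hAB : Function.update (a' ⊔ b) e true = a ⊔ b := by
        funext e'
        by_cases h : e' = e
        · subst h
          rw [Function.update_self]
          show true = (a e' || b e')
          simp [hae]
        · rw [Function.update_of_ne h]
          show (a' e' || b e') = (a e' || b e')
          rw [ha', Function.update_of_ne h]
      have hI : a' ⊓ b = a ⊓ b := by
        funext e'
        by_cases h : e' = e
        · subst h
          show (a' e' && b e') = (a e' && b e')
          simp [hbe]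
        · show (a' e' && b e') = (a e' && b e')
          rw [ha', Function.update_of_ne h]
      rw [hA, hAB] at hedge
      rw [hI] at IH
      omega

end Aux

/-- monotonicity in the edge parameters (stochastic domination): if
`p_e ≤ p'_e` for all edges then for any increasing event `A`,
`P_{p̄,q,G}(A) ≤ P_{p̄',q,G}(A)` (for `q ≥ 1`). -/
theorem fk_stochastic_domination {V E : Type*} [Fintype V] [Fintype E] [DecidableEq E]
    (ends : E → Sym2 V) (h_inj : Function.Injective ends)
    (h_nondiag : ∀ e, ¬ (ends e).IsDiag)
    (q : ℝ) (hq : 1 ≤ q)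
    (pb pb' : E → ℝ) (hpb : ∀ e, pb e ∈ Set.Ioo (0 : ℝ) 1)
    (hpb' : ∀ e, pb' e ∈ Set.Ioo (0 : ℝ) 1)
    (hle : ∀ e, pb e ≤ pb' e)
    (πb πb' : E → ℝ) (hπb : ∀ e, πb e = pb e / (1 - pb e))
    (hπb' : ∀ e, πb' e = pb' e / (1 - pb' e))
    (A : Finset (E → Bool))
    (hA : ∀ w ∈ A, ∀ w' : E → Bool, (∀ e, w e = true → w' e = true) → w' ∈ A) :
    (∑ w ∈ A, fkPBar ends πb q w) ≤ ∑ w ∈ A, fkPBar ends πb' q w := by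
  classical
  have hq0 : (0 : ℝ) < q := lt_of_lt_of_le one_pos hq
  -- positivity of the π's
  have hπpos : ∀ e, 0 < πb e := fun e => by
    rw [hπb e]; exact div_pos (hpb e).1 (by linarith [(hpb e).2])
  have hπ'pos : ∀ e, 0 < πb' e := fun e => by
    rw [hπb' e]; exact div_pos (hpb' e).1 (by linarith [(hpb' e).2])
  have hππ' : ∀ e, πb e ≤ πb' e := fun e => by
    rw [hπb e, hπb' e]
    exact div_le_div₀ (le_of_lt (hpb' e).1) (hle e) (by linarith [(hpb' e).2])
      (by linarith [hle e])
  -- positivity of weights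
  have hWpos : ∀ (π : E → ℝ), (∀ e, 0 < π e) → ∀ w, 0 < fkWeightBar ends π q w := by
    intro π hπ w
    exact mul_pos (prod_pos fun e _ => hπ e) (pow_pos hq0 _)
  have hZpos : ∀ (π : E → ℝ), (∀ e, 0 < π e) → 0 < fkZBar ends π q := by
    intro π hπ
    exact Finset.sum_pos (fun w _ => hWpos π hπ w) univ_nonempty
  -- the Holley condition on the weights
  have hW : ∀ a b : E → Bool,
      fkWeightBar ends πb q a * fkWeightBar ends πb' q b
        ≤ fkWeightBar ends πb q (a ⊓ b) * fkWeightBar ends πb' q (a ⊔ b) := by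
    intro a b
    set S := univ.filter fun e => a e = true with hS
    set T := univ.filter fun e => b e = true with hT
    have hSI : (univ.filter fun e => (a ⊓ b) e = true) = S ∩ T := by
      ext e; simp [hS, hT, mem_inter]
    have hSU : (univ.filter fun e => (a ⊔ b) e = true) = S ∪ T := by
      ext e; simp [hS, hT, mem_union]
    have hprodS : ∏ e ∈ S, πb e = (∏ e ∈ S \ T, πb e) * ∏ e ∈ S ∩ T, πb e := by
      rw [Finset.prod_sdiff (inter_subset_left : S ∩ T ⊆ S) (f := πb) |>.symm,
        Finset.sdiff_inter_self_left]
    have hprodU : ∏ e ∈ S ∪ T, πb' e = (∏ e ∈ S \ T, πb' e) * ∏ e ∈ T, πb' e := by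
      rw [Finset.prod_sdiff (subset_union_right : T ⊆ S ∪ T) (f := πb') |>.symm,
        Finset.union_sdiff_right]
    have hprodle : ∏ e ∈ S \ T, πb e ≤ ∏ e ∈ S \ T, πb' e :=
      Finset.prod_le_prod (fun e _ => (hπpos e).le) (fun e _ => hππ' e)
    have hqle : q ^ compCount ends a * q ^ compCount ends b
        ≤ q ^ compCount ends (a ⊓ b) * q ^ compCount ends (a ⊔ b) := by
      rw [← pow_add, ← pow_add]
      exact pow_le_pow_right₀ hq (compCount_supermod ends h_nondiag a b)
    rw [fkWeightBar, fkWeightBar, fkWeightBar, fkWeightBar, hSI, hSU, ← hS, ← hT,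
      hprodU]
    calc (∏ e ∈ S, πb e) * q ^ compCount ends a * ((∏ e ∈ T, πb' e) * q ^ compCount ends b)
        = ((∏ e ∈ S, πb e) * ∏ e ∈ T, πb' e)
            * (q ^ compCount ends a * q ^ compCount ends b) := by ring
      _ ≤ ((∏ e ∈ S ∩ T, πb e) * ((∏ e ∈ S \ T, πb' e) * ∏ e ∈ T, πb' e))
            * (q ^ compCount ends (a ⊓ b) * q ^ compCount ends (a ⊔ b)) := by
          have hq2 : (0:ℝ) ≤ q ^ compCount ends a * q ^ compCount ends b :=
            mul_nonneg (pow_nonneg hq0.le _) (pow_nonneg hq0.le _)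
          have hprodnn : ∀ (π : E → ℝ), (∀ e, 0 < π e) → ∀ s : Finset E,
              (0:ℝ) ≤ ∏ e ∈ s, π e := fun π hπ s => Finset.prod_nonneg fun e _ => (hπ e).le
          apply mul_le_mul _ hqle hq2
            (mul_nonneg (hprodnn πb hπpos _)
              (mul_nonneg (hprodnn πb' hπ'pos _) (hprodnn πb' hπ'pos _)))
          rw [hprodS]
          calc (∏ e ∈ S \ T, πb e) * (∏ e ∈ S ∩ T, πb e) * ∏ e ∈ T, πb' e
              ≤ (∏ e ∈ S \ T, πb' e) * (∏ e ∈ S ∩ T, πb e) * ∏ e ∈ T, πb' e := by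
                apply mul_le_mul_of_nonneg_right _ (hprodnn πb' hπ'pos _)
                exact mul_le_mul_of_nonneg_right hprodle (hprodnn πb hπpos _)
            _ = (∏ e ∈ S ∩ T, πb e) * ((∏ e ∈ S \ T, πb' e) * ∏ e ∈ T, πb' e) := by ring
      _ = (∏ e ∈ S ∩ T, πb e) * q ^ compCount ends (a ⊓ b)
            * ((∏ e ∈ S \ T, πb' e) * (∏ e ∈ T, πb' e) * q ^ compCount ends (a ⊔ b)) := by
          ring
  -- setup for Holley
  set f : (E → Bool) → ℝ := fkPBar ends πb q with hfdef
  set g : (E → Bool) → ℝ := fkPBar ends πb' q with hgdef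
  set μ : (E → Bool) → ℝ := fun w => if w ∈ A then 1 else 0 with hμdef
  have hZ := hZpos πb hπpos
  have hZ' := hZpos πb' hπ'pos
  have hf0 : (0 : (E → Bool) → ℝ) ≤ f := fun w => by
    exact div_nonneg (hWpos πb hπpos w).le hZ.le
  have hg0 : (0 : (E → Bool) → ℝ) ≤ g := fun w => by
    exact div_nonneg (hWpos πb' hπ'pos w).le hZ'.le
  have hμ0 : (0 : (E → Bool) → ℝ) ≤ μ := fun w => by
    simp only [hμdef]; split <;> norm_num
  have hμmono : Monotone μ := by
    intro w w' hww'
    simp only [hμdef]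
    by_cases hw : w ∈ A
    · have : w' ∈ A := hA w hw w' (fun e he => by
        have := hww' e
        rw [he] at this
        exact le_antisymm (Bool.le_true _) this ▸ rfl)
      simp [hw, this]
    · rw [if_neg hw]
      split <;> norm_num
  have hsum : ∑ w : E → Bool, f w = ∑ w : E → Bool, g w := by
    simp only [hfdef, hgdef, fkPBar, ← Finset.sum_div]
    rw [show (∑ i : E → Bool, fkWeightBar ends πb q i) = fkZBar ends πb q from rfl,
      show (∑ i : E → Bool, fkWeightBar ends πb' q i) = fkZBar ends πb' q from rfl,
      div_self (ne_of_gt hZ), div_self (ne_of_gt hZ')]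
  have hcond : ∀ a b : E → Bool, f a * g b ≤ f (a ⊓ b) * g (a ⊔ b) := by
    intro a b
    simp only [hfdef, hgdef, fkPBar]
    rw [div_mul_div_comm, div_mul_div_comm]
    exact (div_le_div_iff_of_pos_right (mul_pos hZ hZ')).mpr (hW a b)
  have hind : ∀ h : (E → Bool) → ℝ, ∑ w : E → Bool, μ w * h w = ∑ w ∈ A, h w := by
    intro h
    simp only [hμdef, ite_mul, one_mul, zero_mul]
    rw [Finset.sum_ite_mem, Finset.univ_inter]
  rw [← hind f, ← hind g]
  exact holley f g μ hμ0 hf0 hg0 hμmono hsum hcond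

end
end

section
/- Let q > 0, let W = (V,c) be a finite weighted graph with FK measure P_{W,q}, and consider the dynamical coupling w_t(e) = w(e)·1_{ξ(e) ≤ t}. Fix s ≥ 0 and a configuration v with P(w_s = v) > 0. Then the conditional law of w given w_s = v is: for every configuration ω ≥ v, P(w = ω | w_s = v) = (Π_{e : ω(e)=1, v(e)=0} e^{−s}(e^{c(e)} − 1)) · q^{k(ω)} / Σ_{ω' ≥ v} (Π_{e : ω'(e)=1, v(e)=0} e^{−s}(e^{c(e)} − 1)) · q^{k(ω')}, and the conditional probability is 0 unless ω ≥ v. (This is the erosion rule: the effective edge weights at time s satisfy e^{c_s(e)} − 1 = e^{−s}(e^{c(e)} − 1).) -/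
open Finset MeasureTheory

noncomputable section

/-- The FK weight of a configuration on the finite weighted graph `(V, c)`:
`q^{k(w)} Π_{e : w(e) = 1} (e^{c(e)} - 1)`.  Configurations are indexed by all
unordered pairs; pairs that are not edges (i.e. with `c = 0`, in particular the
diagonal ones) carry weight `e^0 - 1 = 0` and hence are almost surely closed. -/
def wFkWeight {V : Type*} [Fintype V] [DecidableEq V] (c : Sym2 V → ℝ) (q : ℝ)
    (w : Sym2 V → Bool) : ℝ :=
  q ^ compCount (id : Sym2 V → Sym2 V) w *
    ∏ s ∈ Finset.univ.filter fun s : Sym2 V => w s = true, (Real.exp (c s) - 1)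

/-- The FK partition function of the finite weighted graph `(V, c)`. -/
def wFkZ {V : Type*} [Fintype V] [DecidableEq V] (c : Sym2 V → ℝ) (q : ℝ) : ℝ :=
  ∑ w : Sym2 V → Bool, wFkWeight c q w

/-- The FK probability of a configuration on the finite weighted graph `(V, c)`. -/
def wFkP {V : Type*} [Fintype V] [DecidableEq V] (c : Sym2 V → ℝ) (q : ℝ)
    (w : Sym2 V → Bool) : ℝ :=
  wFkWeight c q w / wFkZ c q

/-- The FK measure of the finite weighted graph `(V, c)`, as a measure on the
space of configurations. -/
def wFkMeasure {V : Type*} [Fintype V] [DecidableEq V] (c : Sym2 V → ℝ) (q : ℝ) :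
    Measure (Sym2 V → Bool) :=
  ∑ w : Sym2 V → Bool, ENNReal.ofReal (wFkP c q w) • Measure.dirac w

/-- The dynamical coupling measure: the configuration `w` is FK-distributed and
the clocks `ξ(e)` are i.i.d. mean-one exponential random variables, independent
of `w`. -/
def couplingMeasure {V : Type*} [Fintype V] [DecidableEq V] (c : Sym2 V → ℝ) (q : ℝ) :
    Measure ((Sym2 V → Bool) × (Sym2 V → ℝ)) :=
  (wFkMeasure c q).prod (Measure.pi fun _ : Sym2 V => ProbabilityTheory.expMeasure 1)

/-- The configuration at time `t` of the dynamical coupling: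
`w_t(e) = w(e) · 1_{ξ(e) ≤ t}`. -/
def dyn {V : Type*} (t : ℝ) (x : (Sym2 V → Bool) × (Sym2 V → ℝ)) : Sym2 V → Bool :=
  fun e => x.1 e && decide (x.2 e ≤ t)

/-! ### Auxiliary lemmas -/

open Real ProbabilityTheory

set_option linter.unusedSectionVars false

lemma wFkWeight_nonneg {V : Type*} [Fintype V] [DecidableEq V] {c : Sym2 V → ℝ}
    (hc0 : ∀ s, 0 ≤ c s) {q : ℝ} (hq : 0 < q) (w : Sym2 V → Bool) :
    0 ≤ wFkWeight c q w := by
  refine mul_nonneg (pow_nonneg hq.le _) (Finset.prod_nonneg fun e _ => ?_)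
  have := Real.one_le_exp (hc0 e)
  linarith

lemma wFkZ_pos {V : Type*} [Fintype V] [DecidableEq V] {c : Sym2 V → ℝ}
    (hc0 : ∀ s, 0 ≤ c s) {q : ℝ} (hq : 0 < q) : 0 < wFkZ c q := by
  refine Finset.sum_pos' (fun w _ => wFkWeight_nonneg hc0 hq w)
    ⟨fun _ => false, Finset.mem_univ _, ?_⟩
  have h : (Finset.univ.filter fun s : Sym2 V => (fun _ => false) s = true) = ∅ := by simp
  rw [wFkWeight, h, Finset.prod_empty, mul_one]
  exact pow_pos hq _

lemma wFkP_nonneg {V : Type*} [Fintype V] [DecidableEq V] {c : Sym2 V → ℝ}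
    (hc0 : ∀ s, 0 ≤ c s) {q : ℝ} (hq : 0 < q) (w : Sym2 V → Bool) :
    0 ≤ wFkP c q w :=
  div_nonneg (wFkWeight_nonneg hc0 hq w) (wFkZ_pos hc0 hq).le

/-- per-edge clock set -/
def clockSet (s : ℝ) (a b : Bool) : Set ℝ :=
  if a then (if b then Set.Iic s else Set.Ioi s) else (if b then ∅ else Set.univ)

lemma mem_clockSet_iff {s r : ℝ} {a b : Bool} :
    r ∈ clockSet s a b ↔ (a && decide (r ≤ s)) = b := by
  cases a <;> cases b <;> by_cases h : r ≤ s <;>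
    simp [clockSet, h, lt_iff_not_ge]

/-- the per-edge probability factor -/
def mR (s : ℝ) (a b : Bool) : ℝ :=
  if a then (if b then 1 - rexp (-s) else rexp (-s)) else (if b then 0 else 1)

lemma mR_nonneg {s : ℝ} (hs : 0 ≤ s) (a b : Bool) : 0 ≤ mR s a b := by
  have h1 : rexp (-s) ≤ 1 := Real.exp_le_one_iff.2 (by linarith)
  have h2 : 0 < rexp (-s) := Real.exp_pos _
  cases a <;> cases b <;> simp [mR] <;> linarith

lemma expM_Iic {s : ℝ} (hs : 0 ≤ s) :
    expMeasure 1 (Set.Iic s) = ENNReal.ofReal (1 - rexp (-s)) := by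
  haveI : IsProbabilityMeasure (expMeasure 1) := isProbabilityMeasure_expMeasure one_pos
  rw [← ofReal_cdf (expMeasure 1) s]
  have : cdf (expMeasure 1) s = _ := cdf_expMeasure_eq one_pos s
  rw [this, if_pos hs, one_mul]

lemma expM_Ioi {s : ℝ} (hs : 0 ≤ s) :
    expMeasure 1 (Set.Ioi s) = ENNReal.ofReal (rexp (-s)) := by
  haveI : IsProbabilityMeasure (expMeasure 1) := isProbabilityMeasure_expMeasure one_pos
  have h1 : Set.Ioi s = (Set.Iic s)ᶜ := by simp
  have he : rexp (-s) ≤ 1 := Real.exp_le_one_iff.2 (by linarith)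
  rw [h1, measure_compl measurableSet_Iic (measure_ne_top _ _), measure_univ, expM_Iic hs,
    ← ENNReal.ofReal_one, ← ENNReal.ofReal_sub _ (by linarith)]
  norm_num

lemma expM_clockSet {s : ℝ} (hs : 0 ≤ s) (a b : Bool) :
    expMeasure 1 (clockSet s a b) = ENNReal.ofReal (mR s a b) := by
  haveI : IsProbabilityMeasure (expMeasure 1) := isProbabilityMeasure_expMeasure one_pos
  cases a <;> cases b <;> simp [clockSet, mR, expM_Iic hs, expM_Ioi hs]

lemma measurableSet_clockSet (s : ℝ) (a b : Bool) : MeasurableSet (clockSet s a b) := by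
  cases a <;> cases b <;> simp [clockSet]

lemma pi_clock {V : Type*} [Fintype V] [DecidableEq V] {s : ℝ} (hs : 0 ≤ s)
    (v w : Sym2 V → Bool) :
    (Measure.pi fun _ : Sym2 V => expMeasure 1)
      {ξ : Sym2 V → ℝ | (fun e => w e && decide (ξ e ≤ s)) = v}
      = ENNReal.ofReal (∏ e : Sym2 V, mR s (w e) (v e)) := by
  haveI : IsProbabilityMeasure (expMeasure 1) := isProbabilityMeasure_expMeasure one_pos
  have hset : {ξ : Sym2 V → ℝ | (fun e => w e && decide (ξ e ≤ s)) = v}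
      = Set.univ.pi fun e => clockSet s (w e) (v e) := by
    ext ξ
    simp only [Set.mem_setOf_eq, funext_iff, Set.mem_pi, Set.mem_univ, forall_true_left,
      mem_clockSet_iff]
  rw [hset, Measure.pi_pi, ENNReal.ofReal_prod_of_nonneg (fun e _ => mR_nonneg hs _ _)]
  exact Finset.prod_congr rfl fun e _ => expM_clockSet hs _ _

lemma coupling_apply {V : Type*} [Fintype V] [DecidableEq V] (c : Sym2 V → ℝ) (q : ℝ)
    (B : Set ((Sym2 V → Bool) × (Sym2 V → ℝ))) (hB : MeasurableSet B) :
    couplingMeasure c q B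
      = ∑ w : Sym2 V → Bool, ENNReal.ofReal (wFkP c q w) *
          (Measure.pi fun _ : Sym2 V => expMeasure 1) (Prod.mk w ⁻¹' B) := by
  haveI : IsProbabilityMeasure (expMeasure 1) := isProbabilityMeasure_expMeasure one_pos
  rw [couplingMeasure, Measure.prod_apply hB, wFkMeasure, lintegral_finset_sum_measure]
  refine Finset.sum_congr rfl fun w _ => ?_
  rw [lintegral_smul_measure, lintegral_dirac, smul_eq_mul]

/-! ### Main theorem -/

/-- erosion rule: conditionally on `w_s = v`, the final
configuration `w` is FK-distributed above `v` with eroded edge weights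
`e^{c_s(e)} - 1 = e^{-s} (e^{c(e)} - 1)`. -/
theorem coupling_conditional_law {V : Type*} [Fintype V] [DecidableEq V]
    (c : Sym2 V → ℝ) (hc0 : ∀ s, 0 ≤ c s) (hcdiag : ∀ s : Sym2 V, s.IsDiag → c s = 0)
    (q : ℝ) (hq : 0 < q) (s : ℝ) (hs : 0 ≤ s)
    (v : Sym2 V → Bool)
    (hv : 0 < couplingMeasure c q {x | dyn s x = v})
    (ω : Sym2 V → Bool) :
    ((∀ e, v e = true → ω e = true) →
      (ProbabilityTheory.cond (couplingMeasure c q) {x | dyn s x = v} {x | x.1 = ω}).toReal =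
        (∏ e ∈ Finset.univ.filter fun e : Sym2 V => ω e = true ∧ v e = false,
            Real.exp (-s) * (Real.exp (c e) - 1)) * q ^ compCount (id : Sym2 V → Sym2 V) ω /
          ∑ ω' ∈ Finset.univ.filter (fun ω' : Sym2 V → Bool => ∀ e, v e = true → ω' e = true),
            (∏ e ∈ Finset.univ.filter fun e : Sym2 V => ω' e = true ∧ v e = false,
              Real.exp (-s) * (Real.exp (c e) - 1)) * q ^ compCount (id : Sym2 V → Sym2 V) ω') ∧
    (¬ (∀ e, v e = true → ω e = true) →
      ProbabilityTheory.cond (couplingMeasure c q) {x | dyn s x = v} {x | x.1 = ω} = 0) := by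
  classical
  haveI : IsProbabilityMeasure (expMeasure 1) := isProbabilityMeasure_expMeasure one_pos
  set ν : Measure (Sym2 V → ℝ) := Measure.pi fun _ : Sym2 V => expMeasure 1 with hν
  set A : Set ((Sym2 V → Bool) × (Sym2 V → ℝ)) := {x | dyn s x = v} with hA
  set B : Set ((Sym2 V → Bool) × (Sym2 V → ℝ)) := {x | x.1 = ω} with hB
  -- measurability
  have hAeq : A = ⋃ w : Sym2 V → Bool,
      ({w} : Set (Sym2 V → Bool)) ×ˢ (Set.univ.pi fun e => clockSet s (w e) (v e)) := by
    ext x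
    simp only [hA, Set.mem_setOf_eq, Set.mem_iUnion, Set.mem_prod, Set.mem_singleton_iff,
      Set.mem_pi, Set.mem_univ, forall_true_left, mem_clockSet_iff]
    constructor
    · intro h
      exact ⟨x.1, rfl, fun e => congrFun h e⟩
    · rintro ⟨w, hw, h⟩
      funext e
      have := h e
      show (x.1 e && decide (x.2 e ≤ s)) = v e
      rw [hw]
      exact this
  have hAmeas : MeasurableSet A := by
    rw [hAeq]
    exact MeasurableSet.iUnion fun w => (measurableSet_singleton w).prod
      (MeasurableSet.univ_pi fun e => measurableSet_clockSet s _ _)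
  have hBmeas : MeasurableSet B := by
    have : B = Prod.fst ⁻¹' {ω} := rfl
    rw [this]; exact measurable_fst (measurableSet_singleton ω)
  -- preimages
  have hpreA : ∀ w : Sym2 V → Bool,
      Prod.mk w ⁻¹' A = {ξ : Sym2 V → ℝ | (fun e => w e && decide (ξ e ≤ s)) = v} := fun w => rfl
  have hpreAB : Prod.mk ω ⁻¹' (A ∩ B)
      = {ξ : Sym2 V → ℝ | (fun e => ω e && decide (ξ e ≤ s)) = v} := by
    ext ξ
    constructor
    · rintro ⟨h1, _⟩; exact h1
    · intro h; exact ⟨h, rfl⟩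
  have hpreAB' : ∀ w : Sym2 V → Bool, w ≠ ω → Prod.mk w ⁻¹' (A ∩ B) = ∅ := by
    intro w hw
    ext ξ
    simp only [Set.mem_preimage, Set.mem_inter_iff, hB, Set.mem_setOf_eq, Set.mem_empty_iff_false,
      iff_false, not_and]
    intro _; exact hw
  -- the real weights
  set N : (Sym2 V → Bool) → ℝ := fun w => wFkP c q w * ∏ e : Sym2 V, mR s (w e) (v e) with hN
  have hNnonneg : ∀ w, 0 ≤ N w := fun w =>
    mul_nonneg (wFkP_nonneg hc0 hq w) (Finset.prod_nonneg fun e _ => mR_nonneg hs _ _)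
  -- measure computations
  have hμA : couplingMeasure c q A = ENNReal.ofReal (∑ w : Sym2 V → Bool, N w) := by
    rw [coupling_apply c q A hAmeas,
      ENNReal.ofReal_sum_of_nonneg fun w _ => hNnonneg w]
    refine Finset.sum_congr rfl fun w _ => ?_
    rw [hpreA w, ← hν, pi_clock hs v w,
      ← ENNReal.ofReal_mul (wFkP_nonneg hc0 hq w)]
  have hμAB : couplingMeasure c q (A ∩ B) = ENNReal.ofReal (N ω) := by
    rw [coupling_apply c q _ (hAmeas.inter hBmeas)]
    rw [Finset.sum_eq_single ω]
    · rw [hpreAB, ← hν, pi_clock hs v ω, ← ENNReal.ofReal_mul (wFkP_nonneg hc0 hq ω)]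
    · intro w _ hw
      rw [hpreAB' w hw]
      simp
    · intro h; exact absurd (Finset.mem_univ ω) h
  -- the algebra
  set F : (Sym2 V → Bool) → ℝ := fun w =>
    (∏ e ∈ Finset.univ.filter fun e : Sym2 V => w e = true ∧ v e = false,
      rexp (-s) * (rexp (c e) - 1)) * q ^ compCount (id : Sym2 V → Sym2 V) w with hF
  set K : ℝ := (1 - rexp (-s)) ^ (Finset.univ.filter fun e : Sym2 V => v e = true).card *
    (∏ e ∈ Finset.univ.filter fun e : Sym2 V => v e = true, (rexp (c e) - 1)) / wFkZ c q with hK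
  have hFnonneg : ∀ w, 0 ≤ F w := by
    intro w
    refine mul_nonneg (Finset.prod_nonneg fun e _ => mul_nonneg (exp_pos _).le ?_)
      (pow_nonneg hq.le _)
    have := Real.one_le_exp (hc0 e); linarith
  have hE1 : rexp (-s) ≤ 1 := Real.exp_le_one_iff.2 (by linarith)
  have hKnonneg : 0 ≤ K := by
    refine div_nonneg (mul_nonneg (pow_nonneg (by linarith) _)
      (Finset.prod_nonneg fun e _ => ?_)) (wFkZ_pos hc0 hq).le
    have := Real.one_le_exp (hc0 e); linarith
  -- key factorization
  have hNKF : ∀ w : Sym2 V → Bool, (∀ e, v e = true → w e = true) → N w = K * F w := by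
    intro w hvw
    have hfilter1 : (Finset.univ.filter fun e : Sym2 V => w e = true).filter
        (fun e => v e = true) = Finset.univ.filter fun e : Sym2 V => v e = true := by
      rw [Finset.filter_filter]
      exact Finset.filter_congr fun e _ => by
        constructor
        · exact fun h => h.2
        · exact fun h => ⟨hvw e h, h⟩
    have hfilter2 : (Finset.univ.filter fun e : Sym2 V => w e = true).filter
        (fun e => ¬ v e = true) = Finset.univ.filter fun e : Sym2 V => w e = true ∧ v e = false := by
      rw [Finset.filter_filter]
      exact Finset.filter_congr fun e _ => by simp [Bool.not_eq_true]
    have hsplitW : (∏ e ∈ Finset.univ.filter fun e : Sym2 V => w e = true, (rexp (c e) - 1))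
        = (∏ e ∈ Finset.univ.filter fun e : Sym2 V => v e = true, (rexp (c e) - 1)) *
          ∏ e ∈ Finset.univ.filter fun e : Sym2 V => w e = true ∧ v e = false,
            (rexp (c e) - 1) := by
      rw [← Finset.prod_filter_mul_prod_filter_not
        (Finset.univ.filter fun e : Sym2 V => w e = true) (fun e => v e = true),
        hfilter1, hfilter2]
    have hsplitM : (∏ e : Sym2 V, mR s (w e) (v e))
        = (1 - rexp (-s)) ^ (Finset.univ.filter fun e : Sym2 V => v e = true).card *
          rexp (-s) ^ (Finset.univ.filter fun e : Sym2 V => w e = true ∧ v e = false).card := by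
      rw [← Finset.prod_filter_mul_prod_filter_not Finset.univ (fun e : Sym2 V => v e = true)]
      congr 1
      · rw [Finset.prod_congr rfl (fun e he => ?_), Finset.prod_const]
        rw [Finset.mem_filter] at he
        rw [he.2, hvw e he.2]; rfl
      · rw [← Finset.prod_filter_mul_prod_filter_not
          (Finset.univ.filter fun e : Sym2 V => ¬ v e = true) (fun e => w e = true)]
        have h21 : (Finset.univ.filter fun e : Sym2 V => ¬ v e = true).filter
            (fun e => w e = true)
            = Finset.univ.filter fun e : Sym2 V => w e = true ∧ v e = false := by
          rw [Finset.filter_filter]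
          exact Finset.filter_congr fun e _ => by simp [Bool.not_eq_true, and_comm]
        rw [h21]
        have h22 : ∀ e ∈ (Finset.univ.filter fun e : Sym2 V => ¬ v e = true).filter
            (fun e => ¬ w e = true), mR s (w e) (v e) = 1 := by
          intro e he
          simp only [Finset.mem_filter, Bool.not_eq_true] at he
          rw [he.1.2, he.2]; rfl
        rw [Finset.prod_congr rfl h22, Finset.prod_const_one, mul_one]
        rw [Finset.prod_congr rfl (fun e he => ?_), Finset.prod_const]
        simp only [Finset.mem_filter] at he
        rw [he.2.1, he.2.2]; rfl
    have hFsplit : (∏ e ∈ Finset.univ.filter fun e : Sym2 V => w e = true ∧ v e = false,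
        rexp (-s) * (rexp (c e) - 1))
        = rexp (-s) ^ (Finset.univ.filter fun e : Sym2 V => w e = true ∧ v e = false).card *
          ∏ e ∈ Finset.univ.filter fun e : Sym2 V => w e = true ∧ v e = false,
            (rexp (c e) - 1) := by
      rw [Finset.prod_mul_distrib, Finset.prod_const]
    have hZ : wFkZ c q ≠ 0 := (wFkZ_pos hc0 hq).ne'
    have hwp : wFkP c q w = (q ^ compCount (id : Sym2 V → Sym2 V) w *
        ∏ e ∈ Finset.univ.filter fun e : Sym2 V => w e = true, (rexp (c e) - 1)) / wFkZ c q := rfl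
    show wFkP c q w * (∏ e : Sym2 V, mR s (w e) (v e))
        = ((1 - rexp (-s)) ^ (Finset.univ.filter fun e : Sym2 V => v e = true).card *
            (∏ e ∈ Finset.univ.filter fun e : Sym2 V => v e = true, (rexp (c e) - 1)) / wFkZ c q) *
          ((∏ e ∈ Finset.univ.filter fun e : Sym2 V => w e = true ∧ v e = false,
              rexp (-s) * (rexp (c e) - 1)) * q ^ compCount (id : Sym2 V → Sym2 V) w)
    rw [hwp, hsplitW, hsplitM, hFsplit]
    field_simp
  have hNzero : ∀ w : Sym2 V → Bool, ¬ (∀ e, v e = true → w e = true) → N w = 0 := by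
    intro w hw
    push_neg at hw
    obtain ⟨e, hv1, hw0⟩ := hw
    have hw0' : w e = false := by simpa using hw0
    have h0 : mR s (w e) (v e) = 0 := by rw [hv1, hw0']; rfl
    show wFkP c q w * (∏ e : Sym2 V, mR s (w e) (v e)) = 0
    rw [Finset.prod_eq_zero (Finset.mem_univ e) h0, mul_zero]
  -- total mass
  set D : ℝ := ∑ ω' ∈ Finset.univ.filter (fun ω' : Sym2 V → Bool =>
    ∀ e, v e = true → ω' e = true), F ω' with hD
  have hsum : (∑ w : Sym2 V → Bool, N w) = K * D := by
    rw [← Finset.sum_filter_of_ne (s := Finset.univ)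
      (p := fun w : Sym2 V → Bool => ∀ e, v e = true → w e = true)
      (f := N) (fun w _ hne => by by_contra h; exact hne (hNzero w h))]
    rw [hD, Finset.mul_sum]
    refine Finset.sum_congr rfl fun w hw => ?_
    rw [Finset.mem_filter] at hw
    exact hNKF w hw.2
  have hDnonneg : 0 ≤ D := Finset.sum_nonneg fun w _ => hFnonneg w
  have hKD : 0 < K * D := by
    rw [hμA, hsum] at hv
    exact ENNReal.ofReal_pos.1 hv
  have hKpos : 0 < K := by
    rcases lt_or_eq_of_le hKnonneg with h | h
    · exact h
    · exfalso; rw [← h, zero_mul] at hKD; exact lt_irrefl 0 hKD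
  have hDpos : 0 < D := by
    rcases lt_or_eq_of_le hDnonneg with h | h
    · exact h
    · exfalso; rw [← h, mul_zero] at hKD; exact lt_irrefl 0 hKD
  have hcond : ProbabilityTheory.cond (couplingMeasure c q) A B
      = (couplingMeasure c q A)⁻¹ * couplingMeasure c q (A ∩ B) :=
    ProbabilityTheory.cond_apply hAmeas _ _
  constructor
  · intro hvω
    rw [hcond, hμA, hμAB, hsum, hNKF ω hvω, ENNReal.toReal_mul, ENNReal.toReal_inv,
      ENNReal.toReal_ofReal hKD.le, ENNReal.toReal_ofReal (mul_nonneg hKpos.le (hFnonneg ω))]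
    show (K * D)⁻¹ * (K * F ω) = F ω / D
    field_simp
  · intro hvω
    rw [hcond, hμAB, hNzero ω hvω, ENNReal.ofReal_zero, mul_zero]

end
end
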